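/- Let H be a real Hilbert space with inner product a(·,·) and norm ‖·‖, W ⊆ H a closed subspace, and B: H × H → ℝ a map, linear in its second argument, satisfying the monotonicity B(u, u−v) − B(v, u−v) ≥ 0 and the Lipschitz-type bound |B(u,v) − B(w,v)| ≤ M ‖u − w‖ ‖v‖ for all u, v, w in a ball containing all quantities below, with constant M ≥ 0. Suppose u ∈ H and U ∈ W satisfy the Galerkin orthogonality a(u − U, v) + B(u, v) − B(U, v) = 0 for all v ∈ W. Then ‖u − U‖ ≤ (1 + M) · inf_{w ∈ W} ‖u − w‖. -/

import Mathlib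

/-!
Write `e = u - U`. For any `w ∈ W`, split `‖e‖² = ⟪e, u - w⟫ + ⟪e, w - U⟫`. Galerkin orthogonality
turns the second term into `-(B(u; w - U) - B(U; w - U))`; splitting `w - U = (w - u) + e`, the
part with `e` has a sign by monotonicity and the rest is bounded by `M ‖e‖ ‖u - w‖`. With
Cauchy–Schwarz on the first term, `‖e‖² ≤ (1 + M) ‖e‖ ‖u - w‖`, and one factor `‖e‖` cancels.
-/

open scoped RealInnerProductSpace

theorem le_of_mul_self_le_mul {α : Type*} [Semiring α] [LinearOrder α] [IsStrictOrderedRing α]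
    {x c : α} (hx : 0 ≤ x) (hc : 0 ≤ c) (h : x * x ≤ x * c) : x ≤ c := by
  rcases hx.eq_or_lt with rfl | hx
  · exact hc
  · exact le_of_mul_le_mul_left h hx

section Galerkin

variable {H : Type*} [NormedAddCommGroup H] [InnerProductSpace ℝ H] {B : H → H → ℝ} {M : ℝ}
  {u U w : H}

theorem galerkin_inner_sub_le (hBu : IsLinearMap ℝ (B u)) (hBU : IsLinearMap ℝ (B U))
    (hBmono : 0 ≤ B u (u - U) - B U (u - U))
    (hBLip : |B u (w - u) - B U (w - u)| ≤ M * ‖u - U‖ * ‖w - u‖)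
    (hGalerkin : ⟪u - U, w - U⟫ + B u (w - U) - B U (w - U) = 0) :
    ⟪u - U, w - U⟫ ≤ M * ‖u - U‖ * ‖u - w‖ := by
  have hsplit : w - U = (w - u) + (u - U) := (sub_add_sub_cancel w u U).symm
  have hB : B u (w - U) - B U (w - U) =
      (B u (w - u) - B U (w - u)) + (B u (u - U) - B U (u - U)) := by
    rw [hsplit, hBu.map_add, hBU.map_add]
    ring
  rw [norm_sub_rev w u] at hBLip
  linarith [neg_abs_le (B u (w - u) - B U (w - u))]

end Galerkin

theorem quasi_optimality_general
    {H : Type*} [NormedAddCommGroup H] [InnerProductSpace ℝ H]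
    (W : Submodule ℝ H)
    (B : H → H → ℝ) (M : ℝ) (hM : 0 ≤ M)
    (hBlin : ∀ u : H, IsLinearMap ℝ (B u))
    (hBmono : ∀ u v : H, 0 ≤ B u (u - v) - B v (u - v))
    (hBLip : ∀ u v w : H, |B u v - B w v| ≤ M * ‖u - w‖ * ‖v‖)
    (u : H) (U : H) (hU : U ∈ W)
    (hGalerkin : ∀ v ∈ W, (inner ℝ (u - U) v : ℝ) + B u v - B U v = 0) :
    ∀ w ∈ W, ‖u - U‖ ≤ (1 + M) * ‖u - w‖ := by
  intro w hw
  have hinner : ⟪u - U, w - U⟫ ≤ M * ‖u - U‖ * ‖u - w‖ :=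
    galerkin_inner_sub_le (hBlin u) (hBlin U) (hBmono u U) (hBLip u (w - u) U)
      (hGalerkin _ (W.sub_mem hw hU))
  refine le_of_mul_self_le_mul (norm_nonneg _) (by positivity) ?_
  calc ‖u - U‖ * ‖u - U‖ = ⟪u - U, (u - w) + (w - U)⟫ := by
        rw [sub_add_sub_cancel, real_inner_self_eq_norm_mul_norm]
    _ = ⟪u - U, u - w⟫ + ⟪u - U, w - U⟫ := inner_add_right _ _ _
    _ ≤ ‖u - U‖ * ‖u - w‖ + M * ‖u - U‖ * ‖u - w‖ :=
        add_le_add (real_inner_le_norm _ _) hinner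
    _ = ‖u - U‖ * ((1 + M) * ‖u - w‖) := by ring

theorem quasi_optimality
    {H : Type*} [NormedAddCommGroup H] [InnerProductSpace ℝ H] [CompleteSpace H]
    (W : Submodule ℝ H) (hW : IsClosed (W : Set H))
    (B : H → H → ℝ) (M : ℝ) (hM : 0 ≤ M)
    (hBlin : ∀ u : H, IsLinearMap ℝ (B u))
    (hBmono : ∀ u v : H, 0 ≤ B u (u - v) - B v (u - v))
    (hBLip : ∀ u v w : H, |B u v - B w v| ≤ M * ‖u - w‖ * ‖v‖)
    (u : H) (U : H) (hU : U ∈ W)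
    (hGalerkin : ∀ v ∈ W, (inner ℝ (u - U) v : ℝ) + B u v - B U v = 0) :
    ∀ w ∈ W, ‖u - U‖ ≤ (1 + M) * ‖u - w‖ :=
  quasi_optimality_general W B M hM hBlin hBmono hBLip u U hU hGalerkin
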